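/- arXiv:1607.05352 — 5 statements merged into one kernel-verified Lean document; each statement's English description precedes it below -/
import Mathlib

section
/- (Desnanot–Jacobi / Dodgson condensation identity) Let R be a commutative ring and let A be an (n+2)×(n+2) matrix over R. Then det(A) · det(int(A)) = det(A₁) · det(A₂) − det(A₃) · det(A₄), where int(A) is the interior of A (the n×n matrix obtained by deleting the first and last rows and the first and last columns of A), A₁ is the (n+1)×(n+1) minor obtained by deleting the last row and last column, A₂ is the minor obtained by deleting the first row and first column, A₃ is the minor obtained by deleting the last row and first column, and A₄ is the minor obtained by deleting the first row and last column. -/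
/-!
Multiplying a block matrix `M` over `m ⊕ k` by the matrix that is the identity except on the
`m`-columns, where it agrees with `adj M`, gives a block upper-triangular matrix with diagonal
blocks `det M • 1` and `M₂₂`, because `M * adj M = det M • 1`. Hence
`det M * det (adj M)₁₁ = det M ^ |m| * det M₂₂`. For the universal matrix over `ℤ[Xᵢⱼ]` the
factor `det M` is a nonzerodivisor and can be cancelled; specializing gives Jacobi's identity
`det (adj M)₁₁ = det M ^ (|m| - 1) * det M₂₂` over every commutative ring. Dodgson condensation is
the case where `m` indexes the first and last row and column: the four entries of `adj A` there
are the four corner minors, and their signs cancel in pairs.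
-/

open Matrix

namespace Matrix

variable {m k R : Type*} [Fintype m] [Fintype k] [DecidableEq m] [DecidableEq k] [CommRing R]

theorem det_mul_det_toBlocks₁₁_adjugate (M : Matrix (m ⊕ k) (m ⊕ k) R) :
    M.det * M.adjugate.toBlocks₁₁.det = M.det ^ Fintype.card m * M.toBlocks₂₂.det := by
  obtain ⟨X, Y, Z, W, hadj⟩ : ∃ X Y Z W, M.adjugate = fromBlocks X Y Z W :=
    ⟨_, _, _, _, (fromBlocks_toBlocks _).symm⟩
  obtain ⟨P, Q, S, T, rfl⟩ : ∃ P Q S T, M = fromBlocks P Q S T :=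
    ⟨_, _, _, _, (fromBlocks_toBlocks M).symm⟩
  have hmul := mul_adjugate (fromBlocks P Q S T)
  rw [hadj, fromBlocks_multiply, ← fromBlocks_one, fromBlocks_smul, smul_zero, smul_zero] at hmul
  obtain ⟨h₁₁, -, h₂₁, -⟩ := fromBlocks_inj.mp hmul
  set d := (fromBlocks P Q S T).det
  rw [hadj]
  calc d * (fromBlocks X Y Z W).toBlocks₁₁.det
      = (fromBlocks P Q S T * fromBlocks X 0 Z 1).det := by
        rw [det_mul, det_fromBlocks_zero₁₂, det_one, mul_one, toBlocks_fromBlocks₁₁]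
    _ = (fromBlocks (d • 1) Q 0 T).det := by
        simp [fromBlocks_multiply, h₁₁, h₂₁]
    _ = d ^ Fintype.card m * (fromBlocks P Q S T).toBlocks₂₂.det := by
        rw [det_fromBlocks_zero₂₁, det_smul, det_one, mul_one, toBlocks_fromBlocks₂₂]

theorem det_toBlocks₁₁_adjugate [Nonempty m] (M : Matrix (m ⊕ k) (m ⊕ k) R) :
    M.adjugate.toBlocks₁₁.det = M.det ^ (Fintype.card m - 1) * M.toBlocks₂₂.det := by
  let G := mvPolynomialX (m ⊕ k) (m ⊕ k) ℤ
  have hG : G.adjugate.toBlocks₁₁.det = G.det ^ (Fintype.card m - 1) * G.toBlocks₂₂.det := by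
    apply mul_left_cancel₀ (det_mvPolynomialX_ne_zero (m ⊕ k) ℤ)
    rw [det_mul_det_toBlocks₁₁_adjugate, ← mul_assoc, ← pow_succ',
      Nat.sub_add_cancel Fintype.card_pos]
  let φ := MvPolynomial.aeval (R := ℤ) fun p : (m ⊕ k) × (m ⊕ k) => M p.1 p.2
  have hM : φ.mapMatrix G = M := mvPolynomialX_mapMatrix_aeval ℤ M
  have h := congrArg φ hG
  rw [map_mul, map_pow, AlgHom.map_det, AlgHom.map_det, AlgHom.map_det] at h
  rwa [show φ.mapMatrix G.adjugate.toBlocks₁₁ = (φ.mapMatrix G).adjugate.toBlocks₁₁ by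
      rw [← AlgHom.map_adjugate]; rfl,
    show φ.mapMatrix G.toBlocks₂₂ = (φ.mapMatrix G).toBlocks₂₂ from rfl, hM] at h

end Matrix

/-- Rotation by one makes `last, 0` the first two indices, followed by the interior ones. -/
def finBoundarySumInteriorEquiv (n : ℕ) : Fin 2 ⊕ Fin n ≃ Fin (n + 2) :=
  (finSumFinEquiv.trans (finCongr (Nat.add_comm 2 n))).trans (finRotate (n + 2)).symm

lemma finBoundarySumInteriorEquiv_inl_zero (n : ℕ) :
    finBoundarySumInteriorEquiv n (.inl 0) = Fin.last (n + 1) := by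
  rw [finBoundarySumInteriorEquiv, Equiv.trans_apply, Equiv.symm_apply_eq, finRotate_last]
  rfl

lemma finBoundarySumInteriorEquiv_inl_one (n : ℕ) :
    finBoundarySumInteriorEquiv n (.inl 1) = 0 := by
  rw [finBoundarySumInteriorEquiv, Equiv.trans_apply, Equiv.symm_apply_eq, Fin.ext_iff,
    coe_finRotate]
  simp

lemma finBoundarySumInteriorEquiv_inr {n : ℕ} (k : Fin n) :
    finBoundarySumInteriorEquiv n (.inr k) = k.castSucc.succ := by
  rw [finBoundarySumInteriorEquiv, Equiv.trans_apply, Equiv.symm_apply_eq, Fin.ext_iff,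
    coe_finRotate]
  simpa [Fin.ext_iff] using k.is_lt.ne

/-- Desnanot–Jacobi / Dodgson condensation identity. -/
theorem dodgson_condensation_identity {R : Type*} [CommRing R] {n : ℕ}
    (A : Matrix (Fin (n + 2)) (Fin (n + 2)) R) :
    A.det * (A.submatrix (fun i : Fin n => i.castSucc.succ)
        (fun j : Fin n => j.castSucc.succ)).det =
      (A.submatrix (fun i : Fin (n + 1) => i.castSucc)
          (fun j : Fin (n + 1) => j.castSucc)).det *
        (A.submatrix (fun i : Fin (n + 1) => i.succ)
          (fun j : Fin (n + 1) => j.succ)).det -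
      (A.submatrix (fun i : Fin (n + 1) => i.castSucc)
          (fun j : Fin (n + 1) => j.succ)).det *
        (A.submatrix (fun i : Fin (n + 1) => i.succ)
          (fun j : Fin (n + 1) => j.castSucc)).det := by
  set e := finBoundarySumInteriorEquiv n
  have hinterior : (A.submatrix e e).toBlocks₂₂ =
      A.submatrix (fun i : Fin n => i.castSucc.succ) (fun j : Fin n => j.castSucc.succ) := by
    ext i j
    simp only [toBlocks₂₂, of_apply, submatrix_apply, e, finBoundarySumInteriorEquiv_inr]
  have h := det_toBlocks₁₁_adjugate (A.submatrix e e)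
  rw [adjugate_submatrix_equiv_self, det_submatrix_equiv_self, hinterior, Fintype.card_fin,
    Nat.add_one_sub_one, pow_one, det_fin_two] at h
  obtain hs | hs := neg_one_pow_eq_or R (n + 1) <;>
  simp only [toBlocks₁₁, submatrix_apply, of_apply, e, finBoundarySumInteriorEquiv_inl_zero,
      finBoundarySumInteriorEquiv_inl_one, adjugate_fin_succ_eq_det_submatrix, Fin.succAbove_zero,
      Fin.succAbove_last, Fin.val_zero, Fin.val_last, pow_add, pow_zero, hs] at h <;>
  linear_combination -h
end

section
/- (Condensation step with division) Let F be a field and let A be an (n+2)×(n+2) matrix over F whose interior int(A) (the n×n matrix obtained by deleting the first and last rows and columns of A) has nonzero determinant. Then det(A) = (det(A₁) · det(A₂) − det(A₃) · det(A₄)) / det(int(A)), where A₁, A₂, A₃, A₄ are the (n+1)×(n+1) minors of A obtained by deleting, respectively: the last row and last column; the first row and first column; the last row and first column; the first row and last column. -/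
open Matrix

section Aux

variable {n : ℕ}

/-- The two corner indices of `Fin (n+2)`. -/
def dcCorner (n : ℕ) : Fin 2 → Fin (n + 2) := ![0, Fin.last (n + 1)]

def dcBorderMap (n : ℕ) : Fin n ⊕ Fin 2 → Fin (n + 2) :=
  Sum.elim (fun i => i.castSucc.succ) (dcCorner n)

lemma dcBorderMap_injective : Function.Injective (dcBorderMap n) := by
  rintro (i | i) (j | j) h <;>
    simp only [dcBorderMap, dcCorner, Sum.elim_inl, Sum.elim_inr] at h
  · simpa using h
  · apply congrArg Fin.val at h
    fin_cases j <;> simp [Fin.last] at h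
    exact absurd h i.isLt.ne
  · apply congrArg Fin.val at h
    fin_cases i <;> simp [Fin.last] at h
    exact absurd h.symm j.isLt.ne
  · fin_cases i <;> fin_cases j <;> simp_all [Fin.ext_iff, Fin.last]

noncomputable def dcBorderEquiv (n : ℕ) : Fin n ⊕ Fin 2 ≃ Fin (n + 2) :=
  Equiv.ofBijective (dcBorderMap n)
    ((Fintype.bijective_iff_injective_and_card _).mpr ⟨dcBorderMap_injective, by simp⟩)

def dcLoMap (n : ℕ) : Fin n ⊕ Fin 1 → Fin (n + 1) :=
  Sum.elim Fin.succ (fun _ => 0)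

def dcHiMap (n : ℕ) : Fin n ⊕ Fin 1 → Fin (n + 1) :=
  Sum.elim Fin.castSucc (fun _ => Fin.last n)

lemma dcLoMap_injective : Function.Injective (dcLoMap n) := by
  rintro (i | i) (j | j) h <;> simp only [dcLoMap, Sum.elim_inl, Sum.elim_inr] at h
  · simpa using h
  · exact absurd h (Fin.succ_ne_zero i)
  · exact absurd h.symm (Fin.succ_ne_zero j)
  · simp [Subsingleton.elim i j]

lemma dcHiMap_injective : Function.Injective (dcHiMap n) := by
  rintro (i | i) (j | j) h <;> simp only [dcHiMap, Sum.elim_inl, Sum.elim_inr] at h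
  · simpa using h
  · exact absurd h (Fin.castSucc_lt_last i).ne
  · exact absurd h.symm (Fin.castSucc_lt_last j).ne
  · simp [Subsingleton.elim i j]

noncomputable def dcLoEquiv (n : ℕ) : Fin n ⊕ Fin 1 ≃ Fin (n + 1) :=
  Equiv.ofBijective (dcLoMap n)
    ((Fintype.bijective_iff_injective_and_card _).mpr ⟨dcLoMap_injective, by simp⟩)

noncomputable def dcHiEquiv (n : ℕ) : Fin n ⊕ Fin 1 ≃ Fin (n + 1) :=
  Equiv.ofBijective (dcHiMap n)
    ((Fintype.bijective_iff_injective_and_card _).mpr ⟨dcHiMap_injective, by simp⟩)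

end Aux

/-- Condensation step with division over a field. -/
theorem dodgson_condensation_step {F : Type*} [Field F] {n : ℕ}
    (A : Matrix (Fin (n + 2)) (Fin (n + 2)) F)
    (hint : (A.submatrix (fun i : Fin n => i.castSucc.succ)
        (fun j : Fin n => j.castSucc.succ)).det ≠ 0) :
    A.det =
      ((A.submatrix (fun i : Fin (n + 1) => i.castSucc)
          (fun j : Fin (n + 1) => j.castSucc)).det *
        (A.submatrix (fun i : Fin (n + 1) => i.succ)
          (fun j : Fin (n + 1) => j.succ)).det -
      (A.submatrix (fun i : Fin (n + 1) => i.castSucc)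
          (fun j : Fin (n + 1) => j.succ)).det *
        (A.submatrix (fun i : Fin (n + 1) => i.succ)
          (fun j : Fin (n + 1) => j.castSucc)).det) /
      (A.submatrix (fun i : Fin n => i.castSucc.succ)
        (fun j : Fin n => j.castSucc.succ)).det := by
  classical
  set M : Matrix (Fin n) (Fin n) F :=
    A.submatrix (fun i : Fin n => i.castSucc.succ) (fun j : Fin n => j.castSucc.succ) with hMdef
  haveI : Invertible M := M.invertibleOfIsUnitDet (isUnit_iff_ne_zero.mpr hint)
  set B : Matrix (Fin n) (Fin 2) F := fun i j => A i.castSucc.succ (dcCorner n j) with hBdef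
  set C : Matrix (Fin 2) (Fin n) F := fun i j => A (dcCorner n i) j.castSucc.succ with hCdef
  set D : Matrix (Fin 2) (Fin 2) F := fun i j => A (dcCorner n i) (dcCorner n j) with hDdef
  set S : Matrix (Fin 2) (Fin 2) F := D - C * ⅟M * B with hSdef
  -- block decomposition of A itself
  have hA : A.det = M.det * S.det := by
    rw [← Matrix.det_submatrix_equiv_self (dcBorderEquiv n) A]
    have hblk : A.submatrix (dcBorderEquiv n) (dcBorderEquiv n) = Matrix.fromBlocks M B C D := by
      ext (i | i) (j | j) <;> rfl
    rw [hblk, Matrix.det_fromBlocks₁₁]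
  -- the Schur complement for 1×1 borders
  have hmul : ∀ r c : Fin 1 → Fin 2,
      C.submatrix r id * ⅟M * B.submatrix id c = (C * ⅟M * B).submatrix r c := by
    intro r c
    have h1 := Matrix.submatrix_mul_equiv C (⅟M) r (Equiv.refl (Fin n)) id
    have h2 := Matrix.submatrix_mul_equiv (C * ⅟M) B r (Equiv.refl (Fin n)) c
    simp only [Equiv.coe_refl, Matrix.submatrix_id_id] at h1 h2
    rw [h1, h2]
  have key : ∀ (i₀ j₀ : Fin 2),
      (Matrix.fromBlocks M (B.submatrix id fun _ : Fin 1 => j₀)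
        (C.submatrix (fun _ : Fin 1 => i₀) id)
        (D.submatrix (fun _ : Fin 1 => i₀) fun _ : Fin 1 => j₀)).det = M.det * S i₀ j₀ := by
    intro i₀ j₀
    rw [Matrix.det_fromBlocks₁₁, hmul]
    congr 1
    rw [Matrix.det_fin_one]
    simp [hSdef, Matrix.sub_apply]
  -- the four minors in block form
  have e1 : (A.submatrix (fun i : Fin (n + 1) => i.castSucc)
        (fun j : Fin (n + 1) => j.castSucc)).submatrix (dcLoEquiv n) (dcLoEquiv n) =
      Matrix.fromBlocks M (B.submatrix id fun _ : Fin 1 => 0)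
        (C.submatrix (fun _ : Fin 1 => 0) id)
        (D.submatrix (fun _ : Fin 1 => 0) fun _ : Fin 1 => 0) := by
    ext (i | i) (j | j) <;> rfl
  have e2 : (A.submatrix (fun i : Fin (n + 1) => i.succ)
        (fun j : Fin (n + 1) => j.succ)).submatrix (dcHiEquiv n) (dcHiEquiv n) =
      Matrix.fromBlocks M (B.submatrix id fun _ : Fin 1 => 1)
        (C.submatrix (fun _ : Fin 1 => 1) id)
        (D.submatrix (fun _ : Fin 1 => 1) fun _ : Fin 1 => 1) := by
    ext (i | i) (j | j) <;> rfl
  have e3 : (A.submatrix (fun i : Fin (n + 1) => i.castSucc)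
        (fun j : Fin (n + 1) => j.succ)).submatrix (dcLoEquiv n) (dcHiEquiv n) =
      Matrix.fromBlocks M (B.submatrix id fun _ : Fin 1 => 1)
        (C.submatrix (fun _ : Fin 1 => 0) id)
        (D.submatrix (fun _ : Fin 1 => 0) fun _ : Fin 1 => 1) := by
    ext (i | i) (j | j) <;> rfl
  have e4 : (A.submatrix (fun i : Fin (n + 1) => i.succ)
        (fun j : Fin (n + 1) => j.castSucc)).submatrix (dcHiEquiv n) (dcLoEquiv n) =
      Matrix.fromBlocks M (B.submatrix id fun _ : Fin 1 => 0)
        (C.submatrix (fun _ : Fin 1 => 1) id)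
        (D.submatrix (fun _ : Fin 1 => 1) fun _ : Fin 1 => 0) := by
    ext (i | i) (j | j) <;> rfl
  -- determinants of the minors
  have h1 : (A.submatrix (fun i : Fin (n + 1) => i.castSucc)
      (fun j : Fin (n + 1) => j.castSucc)).det = M.det * S 0 0 := by
    rw [← Matrix.det_submatrix_equiv_self (dcLoEquiv n), e1, key]
  have h2 : (A.submatrix (fun i : Fin (n + 1) => i.succ)
      (fun j : Fin (n + 1) => j.succ)).det = M.det * S 1 1 := by
    rw [← Matrix.det_submatrix_equiv_self (dcHiEquiv n), e2, key]
  -- for the off-diagonal minors, we reindex rows and columns by different equivs;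
  -- this produces a sign which cancels in the product.
  set σ : Equiv.Perm (Fin n ⊕ Fin 1) := (dcLoEquiv n).trans (dcHiEquiv n).symm with hσdef
  set ε : F := ((Equiv.Perm.sign σ : ℤ) : F) with hεdef
  have hε : ε * ε = 1 := by
    rw [hεdef, ← Int.cast_mul, ← Units.val_mul, Int.units_mul_self]
    simp
  have reidx : ∀ (N : Matrix (Fin (n + 1)) (Fin (n + 1)) F)
      (er ec : Fin n ⊕ Fin 1 ≃ Fin (n + 1)),
      N.submatrix er ec = (N.submatrix ec ec).submatrix (er.trans ec.symm : _ → _) id := by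
    intro N er ec; ext i j; simp
  have hgen : ∀ (N : Matrix (Fin (n + 1)) (Fin (n + 1)) F)
      (er ec : Fin n ⊕ Fin 1 ≃ Fin (n + 1)),
      (N.submatrix er ec).det = ((Equiv.Perm.sign (er.trans ec.symm) : ℤ) : F) * N.det := by
    intro N er ec
    rw [reidx N er ec, Matrix.det_permute, Matrix.det_submatrix_equiv_self]
  have h3 : (M.det * S 0 1) = ε * (A.submatrix (fun i : Fin (n + 1) => i.castSucc)
      (fun j : Fin (n + 1) => j.succ)).det := by
    have := key 0 1
    rw [← e3, hgen _ (dcLoEquiv n) (dcHiEquiv n)] at this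
    rw [← this, hεdef, hσdef]
  have h4 : (M.det * S 1 0) = ε * (A.submatrix (fun i : Fin (n + 1) => i.succ)
      (fun j : Fin (n + 1) => j.castSucc)).det := by
    have := key 1 0
    rw [← e4, hgen _ (dcHiEquiv n) (dcLoEquiv n)] at this
    rw [← this, hεdef, hσdef]
    congr 2
    have hinv : (dcHiEquiv n).trans (dcLoEquiv n).symm = ((dcLoEquiv n).trans (dcHiEquiv n).symm)⁻¹ := by
      ext x; simp [Equiv.Perm.inv_def]
    rw [hinv, Equiv.Perm.sign_inv]
  -- final computation
  rw [eq_div_iff hint]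
  have hdet2 : S.det = S 0 0 * S 1 1 - S 0 1 * S 1 0 := Matrix.det_fin_two S
  have h34 : (A.submatrix (fun i : Fin (n + 1) => i.castSucc)
        (fun j : Fin (n + 1) => j.succ)).det *
      (A.submatrix (fun i : Fin (n + 1) => i.succ)
        (fun j : Fin (n + 1) => j.castSucc)).det = (M.det * S 0 1) * (M.det * S 1 0) := by
    rw [h3, h4, mul_mul_mul_comm, hε, one_mul]
  rw [hA, h1, h2, h34, hdet2]
  ring
end

section
/- (Jacobi's theorem for m = 2, principal 2×2 minor of the adjugate) Let R be a commutative ring, let A be an (n+2)×(n+2) matrix over R with adjugate A', and let p, q be two distinct indices. Then A'_{pp} · A'_{qq} − A'_{pq} · A'_{qp} = det(A) · det(B), where B is the n×n complementary minor of A obtained by deleting rows p and q and columns p and q from A. -/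
/-!
Replacing the last `m` columns of the identity by the corresponding columns of `adj M` gives a
matrix `C` with `det C = det (adj M)₂₂`, and `M * C` is block lower triangular with diagonal blocks
`M₁₁` and `det M • 1`. Hence `det M * det (adj M)₂₂ = det M ^ m * det M₁₁`. Over the generic matrix
with entries in `ℤ[xᵢⱼ]` the determinant is a nonzero divisor and can be cancelled; the resulting
polynomial identity specialises to every matrix. For `m = 2`, reindex so that `p, q` come last.
-/

open Function

namespace Matrix

variable {R : Type*} [CommRing R] {κ ι : Type*} [Fintype κ] [Fintype ι] [DecidableEq κ]
  [DecidableEq ι]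

theorem det_mul_det_toBlocks₂₂_adjugate (M : Matrix (κ ⊕ ι) (κ ⊕ ι) R) :
    M.det * M.adjugate.toBlocks₂₂.det = M.det ^ Fintype.card ι * M.toBlocks₁₁.det := by
  have hC : M * fromBlocks 1 M.adjugate.toBlocks₁₂ 0 M.adjugate.toBlocks₂₂ =
      fromBlocks M.toBlocks₁₁ 0 M.toBlocks₂₁ (M.det • 1) := by
    have h := mul_adjugate M
    generalize M.adjugate = N at h ⊢
    generalize M.det = d at h ⊢
    rw [← fromBlocks_toBlocks M, ← fromBlocks_toBlocks N] at h ⊢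
    rw [fromBlocks_multiply, ← fromBlocks_one, fromBlocks_smul, fromBlocks_inj] at h
    simp only [fromBlocks_multiply, toBlocks_fromBlocks₁₁, toBlocks_fromBlocks₁₂,
      toBlocks_fromBlocks₂₁, toBlocks_fromBlocks₂₂, h.2.1, h.2.2.2, Matrix.mul_one,
      Matrix.mul_zero, add_zero, smul_zero]
  have h := congrArg det hC
  rw [det_mul, det_fromBlocks_zero₂₁, det_fromBlocks_zero₁₂, det_one, one_mul, det_smul,
    det_one, mul_one] at h
  rw [h, mul_comm]

theorem det_toBlocks₂₂_adjugate [Nonempty ι] (M : Matrix (κ ⊕ ι) (κ ⊕ ι) R) :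
    M.adjugate.toBlocks₂₂.det = M.det ^ (Fintype.card ι - 1) * M.toBlocks₁₁.det := by
  let A := mvPolynomialX (κ ⊕ ι) (κ ⊕ ι) ℤ
  have generic : A.adjugate.toBlocks₂₂.det = A.det ^ (Fintype.card ι - 1) * A.toBlocks₁₁.det :=
    mul_left_cancel₀ (det_mvPolynomialX_ne_zero _ ℤ) <| by
      rw [det_mul_det_toBlocks₂₂_adjugate, ← mul_assoc, ← pow_succ',
        Nat.sub_add_cancel Fintype.card_pos]
  let φ := MvPolynomial.aeval (R := ℤ) fun ij : (κ ⊕ ι) × (κ ⊕ ι) => M ij.1 ij.2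
  rw [← mvPolynomialX_mapMatrix_aeval ℤ M, ← AlgHom.map_adjugate]
  change (φ.mapMatrix A.adjugate.toBlocks₂₂).det =
    (φ.mapMatrix A).det ^ _ * (φ.mapMatrix A.toBlocks₁₁).det
  rw [← AlgHom.map_det, ← AlgHom.map_det, ← AlgHom.map_det, generic, map_mul, map_pow]

end Matrix

noncomputable def Equiv.sumFinTwoOfRangeEqCompl {κ ι : Type*} (e : κ → ι) (he : Injective e)
    {p q : ι} (hpq : p ≠ q) (hrange : Set.range e = {p, q}ᶜ) : κ ⊕ Fin 2 ≃ ι :=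
  Equiv.ofBijective (Sum.elim e ![p, q]) <| by
    have hpair : Set.range ![p, q] = {p, q} := Matrix.range_cons_cons_empty p q ![]
    refine ⟨he.sumElim ?_ ?_, ?_⟩
    · intro i j
      fin_cases i <;> fin_cases j <;> simp [hpq, hpq.symm]
    · intro i j hij
      have hi : e i ∈ ({p, q} : Set ι)ᶜ := hrange ▸ ⟨i, rfl⟩
      exact hi (hij ▸ hpair ▸ ⟨j, rfl⟩)
    · rw [← Set.range_eq_univ, Set.Sum.elim_range, hrange, hpair, Set.compl_union_self]

/-- Jacobi's theorem for m = 2: principal 2×2 minor of the adjugate. -/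
theorem jacobi_m_two_principal {R : Type*} [CommRing R] {n : ℕ}
    (A : Matrix (Fin (n + 2)) (Fin (n + 2)) R) (p q : Fin (n + 2)) (hpq : p ≠ q)
    (e : Fin n → Fin (n + 2)) (he : StrictMono e)
    (hrange : Set.range e = ({p, q} : Set (Fin (n + 2)))ᶜ) :
    A.adjugate p p * A.adjugate q q - A.adjugate p q * A.adjugate q p =
      A.det * (A.submatrix e e).det := by
  let σ := Equiv.sumFinTwoOfRangeEqCompl e he.injective hpq hrange
  have h := Matrix.det_toBlocks₂₂_adjugate (A.submatrix σ σ)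
  rwa [Matrix.adjugate_submatrix_equiv_self, Matrix.det_submatrix_equiv_self, Matrix.det_fin_two,
    Fintype.card_fin, Nat.add_one_sub_one, pow_one] at h
end

section
/- (Entrywise condensation recurrence for consecutive minors) Let R be a commutative ring and let A : ℕ × ℕ → R be a doubly indexed family of elements of R. For k ≥ 0 and i, j ∈ ℕ, let M_k(i,j) denote the determinant of the (k+1)×(k+1) consecutive minor of A with entries A(i+s, j+t) for 0 ≤ s,t ≤ k. Then for all k ≥ 1 and all i, j: M_{k+1}(i,j) · M_{k−1}(i+1, j+1) = M_k(i,j) · M_k(i+1, j+1) − M_k(i, j+1) · M_k(i+1, j). -/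
/-!
Multiplying `A : Matrix (m ⊕ n) (m ⊕ n) R` on the right by the block matrix
`[[(adj A)₁₁, 0], [(adj A)₂₁, 1]]` gives the block upper-triangular matrix
`[[det A • 1, A₁₂], [0, A₂₂]]`, hence `det A * det (adj A)₁₁ = det A ^ |m| * det A₂₂`
(Jacobi's complementary minor theorem), and `det A` can be cancelled for the generic matrix.
Putting the two end indices of `Fin (n + 2)` into the first block, the entries of `(adj A)₁₁`
are, up to signs that cancel, the four corner minors of size `n + 1`: this is the
Desnanot–Jacobi identity. The minors in the recurrence are the corner minors and the central
minor of `M_{k+1}(i, j)`.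
-/

/-- Determinant of the `(k+1) × (k+1)` consecutive minor of `A` with upper-left
corner at `(i, j)`. -/
def consecMinorDet {R : Type*} [CommRing R] (A : ℕ × ℕ → R) (k i j : ℕ) : R :=
  (Matrix.of fun s t : Fin (k + 1) => A (i + s, j + t)).det

open Matrix

namespace Matrix

variable {m n R : Type*} [Fintype m] [Fintype n] [DecidableEq m] [DecidableEq n] [CommRing R]

theorem det_mul_det_toBlocks₁₁_adjugate_s7 (A : Matrix (m ⊕ n) (m ⊕ n) R) :
    A.det * (adjugate A).toBlocks₁₁.det = A.det ^ Fintype.card m * A.toBlocks₂₂.det := by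
  have hblocks := A.mul_adjugate
  rw [← A.adjugate.fromBlocks_toBlocks] at hblocks
  nth_rw 1 [← A.fromBlocks_toBlocks] at hblocks
  rw [fromBlocks_multiply, ← fromBlocks_one, fromBlocks_smul, fromBlocks_inj] at hblocks
  obtain ⟨h₁₁, -, h₂₁, -⟩ := hblocks
  have hprod : A * fromBlocks (adjugate A).toBlocks₁₁ 0 (adjugate A).toBlocks₂₁ 1 =
      fromBlocks (A.det • 1) A.toBlocks₁₂ 0 A.toBlocks₂₂ := by
    nth_rw 1 [← A.fromBlocks_toBlocks]
    rw [fromBlocks_multiply, h₁₁, h₂₁]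
    simp
  have hdet := congrArg det hprod
  rwa [det_mul, det_fromBlocks_zero₁₂, det_fromBlocks_zero₂₁, det_one, mul_one, det_smul,
    det_one, mul_one] at hdet

theorem det_toBlocks₁₁_adjugate_s7 [Nonempty m] (A : Matrix (m ⊕ n) (m ⊕ n) R) :
    (adjugate A).toBlocks₁₁.det = A.det ^ (Fintype.card m - 1) * A.toBlocks₂₂.det := by
  let X := mvPolynomialX (m ⊕ n) (m ⊕ n) ℤ
  suffices hX : (adjugate X).toBlocks₁₁.det = X.det ^ (Fintype.card m - 1) * X.toBlocks₂₂.det by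
    let f : MvPolynomial ((m ⊕ n) × (m ⊕ n)) ℤ →ₐ[ℤ] R := MvPolynomial.aeval fun p ↦ A p.1 p.2
    have hXA : X.map f = A := mvPolynomialX_map_eval₂ _ A
    have hfX := congrArg f hX
    rw [map_mul, map_pow, AlgHom.map_det, AlgHom.map_det, AlgHom.map_det] at hfX
    change (X.adjugate.map f).toBlocks₁₁.det = (X.map f).det ^ _ * (X.map f).toBlocks₂₂.det at hfX
    rwa [← AlgHom.mapMatrix_apply, AlgHom.map_adjugate, AlgHom.mapMatrix_apply, hXA] at hfX
  apply mul_left_cancel₀ (det_mvPolynomialX_ne_zero (m ⊕ n) ℤ)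
  rw [det_mul_det_toBlocks₁₁_adjugate_s7, ← mul_assoc, ← pow_succ',
    Nat.sub_add_cancel Fintype.card_pos]

end Matrix

noncomputable def Fin.endsSumInteriorEquiv (n : ℕ) : Fin 2 ⊕ Fin n ≃ Fin (n + 2) :=
  Equiv.ofBijective (Sum.elim ![0, Fin.last (n + 1)] fun t ↦ t.castSucc.succ) <| by
    refine (Fintype.bijective_iff_injective_and_card _).2 ⟨?_, by simp [add_comm]⟩
    simp only [Function.Injective, Sum.forall, Fin.forall_fin_two]
    simpa [Fin.ext_iff] using ⟨fun b : Fin n ↦ b.isLt.ne', fun b : Fin n ↦ b.isLt.ne⟩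

theorem Matrix.desnanot_jacobi {R : Type*} [CommRing R] {n : ℕ}
    (M : Matrix (Fin (n + 2)) (Fin (n + 2)) R) :
    M.det * (M.submatrix (Fin.succ ∘ Fin.castSucc) (Fin.succ ∘ Fin.castSucc)).det =
      (M.submatrix Fin.succ Fin.succ).det * (M.submatrix Fin.castSucc Fin.castSucc).det -
        (M.submatrix Fin.castSucc Fin.succ).det * (M.submatrix Fin.succ Fin.castSucc).det := by
  let e := Fin.endsSumInteriorEquiv n
  have h := det_toBlocks₁₁_adjugate_s7 (M.submatrix e e)
  have h₂₂ : (M.submatrix e e).toBlocks₂₂ =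
      M.submatrix (Fin.succ ∘ Fin.castSucc) (Fin.succ ∘ Fin.castSucc) := rfl
  rw [adjugate_submatrix_equiv_self, det_submatrix_equiv_self, det_fin_two, h₂₂] at h
  have hsign : (-1 : R) ^ (n + 1 + (n + 1)) = 1 := (Even.add_self _).neg_one_pow
  simp only [toBlocks₁₁, e, Fin.endsSumInteriorEquiv, Equiv.coe_ofBijective, submatrix_apply,
    of_apply, Sum.elim_inl, cons_val_zero, cons_val_one, cons_val_fin_one,
    adjugate_fin_succ_eq_det_submatrix, Fin.succAbove_zero, Fin.succAbove_last, Fin.val_zero,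
    Fin.val_last, Fintype.card_fin, Nat.add_one_sub_one, pow_one, add_zero, zero_add, pow_zero,
    hsign, one_mul] at h
  rwa [mul_mul_mul_comm, ← pow_add, hsign, one_mul, eq_comm] at h

theorem det_submatrix_consecMinor {R : Type*} [CommRing R] (A : ℕ × ℕ → R) {N n : ℕ}
    (i j a b : ℕ) (f g : Fin (n + 1) → Fin (N + 1))
    (hf : ∀ s, (f s : ℕ) = s + a) (hg : ∀ t, (g t : ℕ) = t + b) :
    ((of fun s t : Fin (N + 1) => A (i + s, j + t)).submatrix f g).det =
      consecMinorDet A n (i + a) (j + b) := by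
  congr 1
  ext s t
  simp only [submatrix_apply, of_apply, hf, hg]
  ring_nf

/-- Entrywise condensation recurrence for consecutive minors. -/
theorem consecMinor_condensation {R : Type*} [CommRing R] (A : ℕ × ℕ → R) :
    ∀ k, 1 ≤ k → ∀ i j,
      consecMinorDet A (k + 1) i j * consecMinorDet A (k - 1) (i + 1) (j + 1) =
        consecMinorDet A k i j * consecMinorDet A k (i + 1) (j + 1) -
        consecMinorDet A k i (j + 1) * consecMinorDet A k (i + 1) j := by
  intro k hk i j
  obtain ⟨n, rfl⟩ := Nat.exists_eq_add_of_le' hk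
  have h := desnanot_jacobi (of fun s t : Fin (n + 3) => A (i + s, j + t))
  rw [det_submatrix_consecMinor A i j 1 1 (Fin.succ ∘ Fin.castSucc) (Fin.succ ∘ Fin.castSucc)
      (fun _ ↦ rfl) (fun _ ↦ rfl),
    det_submatrix_consecMinor A i j 1 1 Fin.succ Fin.succ (fun _ ↦ rfl) (fun _ ↦ rfl),
    det_submatrix_consecMinor A i j 0 0 Fin.castSucc Fin.castSucc (fun _ ↦ rfl) (fun _ ↦ rfl),
    det_submatrix_consecMinor A i j 0 1 Fin.castSucc Fin.succ (fun _ ↦ rfl) (fun _ ↦ rfl),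
    det_submatrix_consecMinor A i j 1 0 Fin.succ Fin.castSucc (fun _ ↦ rfl) (fun _ ↦ rfl)] at h
  rw [Nat.add_sub_cancel, mul_comm (consecMinorDet A (n + 1) i j)]
  simp only [add_zero] at h
  exact h
end

section
/- (Invariant of the condensation algorithm) Let F be a field, let A : ℕ × ℕ → F, and let C : ℕ → ℕ → ℕ → F satisfy conditions (i)–(iii) of the condensation recursion: C₀(i,j) = A(i,j); C₁(i,j) = A(i,j)·A(i+1,j+1) − A(i,j+1)·A(i+1,j); and for k ≥ 1, whenever C_{k−1}(i+1,j+1) ≠ 0, C_{k+1}(i,j) = (C_k(i,j)·C_k(i+1,j+1) − C_k(i,j+1)·C_k(i+1,j)) / C_{k−1}(i+1,j+1). Suppose that for all k ≥ 1 and all i, j, C_{k−1}(i+1,j+1) ≠ 0. Then for every k and all i, j, C_k(i,j) equals the determinant of the (k+1)×(k+1) consecutive minor of A with entries A(i+s, j+t) for 0 ≤ s,t ≤ k. -/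
/-!
Dodgson condensation is the Desnanot–Jacobi identity
`det M · det E = det M₀₀ · det M₁₁ - det M₀₁ · det M₁₀`, where `E` is the interior of `M` and
`M_pq` is the minor keeping the row of corner `p` and the column of corner `q`. Ordering the
indices as interior ⊕ two corners, the Schur complement `S` of `E` is `2 × 2`, and each corner
minor is a bordered matrix `[E b; c d]` whose determinant is `det E · S p q`; hence both sides
equal `(det E)² · det S`. Back on `Fin (n + 2)`, the reindexings of the two off-diagonal corner
minors differ by mutually inverse permutations, so their signs cancel. The invariant then
follows by two-step induction on `k`; the nonvanishing of `C_{k-1}(i+1, j+1)` makes each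
division exact.
-/

open Matrix Equiv Function

theorem bijective_sumElim_of_card {α β γ : Type*} [Fintype α] [Fintype β] [Fintype γ]
    {f : α → γ} {g : β → γ} (hf : Injective f) (hg : Injective g) (hfg : ∀ a b, f a ≠ g b)
    (hcard : Fintype.card α + Fintype.card β = Fintype.card γ) : Bijective (Sum.elim f g) :=
  (Fintype.bijective_iff_injective_and_card _).2 ⟨hf.sumElim hg hfg, by simpa using hcard⟩

namespace Matrix

variable {R : Type*} [CommRing R]

theorem det_submatrix_sumMap_eq_det_mul_schur {ι κ : Type*} [Fintype ι] [DecidableEq ι]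
    (M : Matrix (ι ⊕ κ) (ι ⊕ κ) R) [Invertible M.toBlocks₁₁] (p q : κ) :
    (M.submatrix (Sum.map id fun _ : Unit => p) (Sum.map id fun _ : Unit => q)).det =
      M.toBlocks₁₁.det * (M.toBlocks₂₂ - M.toBlocks₂₁ * ⅟M.toBlocks₁₁ * M.toBlocks₁₂) p q := by
  have hblocks : M.submatrix (Sum.map id fun _ : Unit => p) (Sum.map id fun _ : Unit => q) =
      fromBlocks M.toBlocks₁₁ (M.toBlocks₁₂.submatrix id fun _ => q)
        (M.toBlocks₂₁.submatrix (fun _ => p) id)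
        (M.toBlocks₂₂.submatrix (fun _ => p) fun _ => q) := by
    ext (a | a) (b | b) <;> rfl
  rw [hblocks, det_fromBlocks₁₁, det_unique (n := Unit)]
  simp [mul_apply]

/-- Desnanot–Jacobi identity in block form. -/
theorem det_mul_det_toBlocks₁₁ {ι : Type*} [Fintype ι] [DecidableEq ι]
    (M : Matrix (ι ⊕ Fin 2) (ι ⊕ Fin 2) R) (hE : IsUnit M.toBlocks₁₁.det) :
    M.det * M.toBlocks₁₁.det =
      (M.submatrix (Sum.map id fun _ : Unit => 0) (Sum.map id fun _ : Unit => 0)).det *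
        (M.submatrix (Sum.map id fun _ : Unit => 1) (Sum.map id fun _ : Unit => 1)).det -
      (M.submatrix (Sum.map id fun _ : Unit => 0) (Sum.map id fun _ : Unit => 1)).det *
        (M.submatrix (Sum.map id fun _ : Unit => 1) (Sum.map id fun _ : Unit => 0)).det := by
  have := M.toBlocks₁₁.invertibleOfIsUnitDet hE
  have hM : M.det = M.toBlocks₁₁.det *
      (M.toBlocks₂₂ - M.toBlocks₂₁ * ⅟M.toBlocks₁₁ * M.toBlocks₁₂).det := by
    conv_lhs => rw [← fromBlocks_toBlocks M]
    exact det_fromBlocks₁₁ ..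
  simp only [det_submatrix_sumMap_eq_det_mul_schur, hM, det_fin_two]
  ring

theorem det_submatrix_mul_det_submatrix_swap {ι m : Type*} [Fintype ι] [DecidableEq ι]
    [Fintype m] [DecidableEq m] (N N' : Matrix m m R) (σ τ : ι ≃ m) :
    (N.submatrix σ τ).det * (N'.submatrix τ σ).det = N.det * N'.det := by
  have key : ∀ (N : Matrix m m R) (σ τ : ι ≃ m),
      (N.submatrix σ τ).det = Perm.sign (τ.symm.trans σ) * N.det := by
    intro N σ τ
    rw [← det_permute, ← det_submatrix_equiv_self τ]
    congr 1; ext a b; simp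
  rw [key, key, show σ.symm.trans τ = (τ.symm.trans σ)⁻¹ from rfl, Perm.sign_inv,
    mul_mul_mul_comm, ← Int.cast_mul, ← Units.val_mul, Int.units_mul_self, Units.val_one,
    Int.cast_one, one_mul]

/-- Desnanot–Jacobi identity. -/
theorem det_mul_det_submatrix_interior {n : ℕ} (M : Matrix (Fin (n + 2)) (Fin (n + 2)) R)
    (hE : IsUnit (M.submatrix (fun s : Fin n => s.succ.castSucc) fun s => s.succ.castSucc).det) :
    M.det * (M.submatrix (fun s : Fin n => s.succ.castSucc) fun s => s.succ.castSucc).det =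
      (M.submatrix Fin.castSucc Fin.castSucc).det * (M.submatrix Fin.succ Fin.succ).det -
      (M.submatrix Fin.castSucc Fin.succ).det * (M.submatrix Fin.succ Fin.castSucc).det := by
  let e : Fin n ⊕ Fin 2 ≃ Fin (n + 2) := .ofBijective _ <|
    bijective_sumElim_of_card (f := fun s : Fin n => s.succ.castSucc) (g := ![0, Fin.last _])
      (Fin.castSucc_injective _ |>.comp (Fin.succ_injective _))
      (by intro a b h; fin_cases a <;> fin_cases b <;> simp_all [Fin.ext_iff])
      (by intro a b; fin_cases b <;> simp [Fin.ext_iff]; omega) (by simp)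
  let g₀ : Fin n ⊕ Unit ≃ Fin (n + 1) := .ofBijective _ <|
    bijective_sumElim_of_card (f := Fin.succ) (g := fun _ => 0) (Fin.succ_injective _)
      (fun _ _ _ => rfl) (fun a _ => Fin.succ_ne_zero a) (by simp)
  let g₁ : Fin n ⊕ Unit ≃ Fin (n + 1) := .ofBijective _ <|
    bijective_sumElim_of_card (f := Fin.castSucc) (g := fun _ => Fin.last n)
      (Fin.castSucc_injective _) (fun _ _ _ => rfl) (fun a _ => Fin.castSucc_ne_last a) (by simp)
  have he₀ : e ∘ Sum.map id (fun _ => 0) = Fin.castSucc ∘ g₀ := by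
    funext s; rcases s with s | _ <;> simp [e, g₀]
  have he₁ : e ∘ Sum.map id (fun _ => 1) = Fin.succ ∘ g₁ := by
    funext s; rcases s with s | _ <;> simp [e, g₁]
  have hdet := det_mul_det_toBlocks₁₁ (M.submatrix e e) hE
  simp only [submatrix_submatrix, he₀, he₁] at hdet
  rw [← submatrix_submatrix, ← submatrix_submatrix, ← submatrix_submatrix, ← submatrix_submatrix,
    det_submatrix_equiv_self, det_submatrix_equiv_self, det_submatrix_equiv_self,
    det_submatrix_mul_det_submatrix_swap] at hdet
  exact hdet

end Matrix

def consecutiveMinor {R : Type*} (A : ℕ × ℕ → R) (m i j : ℕ) : Matrix (Fin m) (Fin m) R :=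
  of fun s t => A (i + s, j + t)

theorem consecutiveMinor_submatrix {R : Type*} (A : ℕ × ℕ → R) {m m' i j a b : ℕ}
    {f g : Fin m' → Fin m} (hf : ∀ s, (f s : ℕ) = a + s) (hg : ∀ t, (g t : ℕ) = b + t) :
    (consecutiveMinor A m i j).submatrix f g = consecutiveMinor A m' (i + a) (j + b) := by
  ext s t
  simp [consecutiveMinor, hf, hg, add_assoc]

theorem det_consecutiveMinor_mul_det {R : Type*} [CommRing R] (A : ℕ × ℕ → R) (n i j : ℕ)
    (hE : IsUnit (consecutiveMinor A n (i + 1) (j + 1)).det) :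
    (consecutiveMinor A (n + 2) i j).det * (consecutiveMinor A n (i + 1) (j + 1)).det =
      (consecutiveMinor A (n + 1) i j).det * (consecutiveMinor A (n + 1) (i + 1) (j + 1)).det -
      (consecutiveMinor A (n + 1) i (j + 1)).det * (consecutiveMinor A (n + 1) (i + 1) j).det := by
  have hcast : ∀ s : Fin (n + 1), (s.castSucc : ℕ) = 0 + s := by simp
  have hsucc : ∀ s : Fin (n + 1), (s.succ : ℕ) = 1 + s := by simp [add_comm]
  have hint : ∀ s : Fin n, (s.succ.castSucc : ℕ) = 1 + s := by simp [add_comm]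
  have := det_mul_det_submatrix_interior (consecutiveMinor A (n + 2) i j)
  simp only [consecutiveMinor_submatrix A hcast hcast, consecutiveMinor_submatrix A hsucc hsucc,
    consecutiveMinor_submatrix A hcast hsucc, consecutiveMinor_submatrix A hsucc hcast,
    consecutiveMinor_submatrix A hint hint, add_zero] at this
  exact this hE

/-- Invariant of the condensation algorithm: after `k` steps, the entries are
the determinants of the `(k+1) × (k+1)` consecutive minors of `A`. -/
theorem dodgson_algorithm_invariant {F : Type*} [Field F]
    (A : ℕ × ℕ → F) (C : ℕ → ℕ → ℕ → F)
    (h0 : ∀ i j, C 0 i j = A (i, j))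
    (h1 : ∀ i j, C 1 i j =
      A (i, j) * A (i + 1, j + 1) - A (i, j + 1) * A (i + 1, j))
    (hstep : ∀ k, 1 ≤ k → ∀ i j, C (k - 1) (i + 1) (j + 1) ≠ 0 →
      C (k + 1) i j =
        (C k i j * C k (i + 1) (j + 1) - C k i (j + 1) * C k (i + 1) j) /
          C (k - 1) (i + 1) (j + 1))
    (hne : ∀ k, 1 ≤ k → ∀ i j, C (k - 1) (i + 1) (j + 1) ≠ 0) :
    ∀ k i j, C k i j =
      (Matrix.of fun s t : Fin (k + 1) => A (i + s, j + t)).det := by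
  intro k
  induction k using Nat.twoStepInduction with
  | zero => simp [h0]
  | one => simp [h1, det_fin_two]
  | more k ih ih₁ =>
    intro i j
    have hE : C k (i + 1) (j + 1) ≠ 0 := hne (k + 1) le_add_self i j
    rw [hstep (k + 1) le_add_self i j hE, Nat.add_sub_cancel, div_eq_iff hE, ih₁, ih₁, ih₁, ih₁, ih]
    rw [ih] at hE
    exact (det_consecutiveMinor_mul_det A (k + 1) i j (isUnit_iff_ne_zero.2 hE)).symm
end
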